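/- arXiv:2304.13485 — 2 statements merged into one kernel-verified Lean document; each statement's English description precedes it below -/
import Mathlib

section
/- Let F = {f_1,...,f_k} ⊆ K[x_1,...,x_n] be a finite family of polynomials. Then the last fall degree satisfies Lfd(F) ≤ max{d_reg(F) + 1, deg(f_1), ..., deg(f_k)}. -/
open MvPolynomial

noncomputable section

/-- The total degree of a monomial exponent vector. -/
def mdeg {n : ℕ} (s : Fin n →₀ ℕ) : ℕ := s.sum fun _ e => e

/-- The top homogeneous component (homogeneous part of largest degree) of a polynomial. -/
def topPart {n : ℕ} {K : Type*} [CommSemiring K] (f : MvPolynomial (Fin n) K) :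
    MvPolynomial (Fin n) K :=
  homogeneousComponent f.totalDegree f

/-- `regAt F d` says that the degree-`d` part of the ideal generated by the top homogeneous
parts of the elements of `F` is all of `K[x₁,…,xₙ]_d`; the degree of regularity of `F` is the
least such `d`. -/
def regAt {n : ℕ} {K : Type*} [Field K] (F : Finset (MvPolynomial (Fin n) K)) (d : ℕ) : Prop :=
  ∀ p : MvPolynomial (Fin n) K, p.IsHomogeneous d →
    p ∈ Ideal.span (topPart '' (F : Set (MvPolynomial (Fin n) K)))

/-- `V F d` : the smallest `K`-linear subspace containing all elements of `F` of total degree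
at most `d`, and closed under multiplication by monomials as long as the degree stays `≤ d`. -/
def V {n : ℕ} {K : Type*} [Field K] (F : Finset (MvPolynomial (Fin n) K)) (d : ℕ) :
    Submodule K (MvPolynomial (Fin n) K) :=
  sInf {W | (∀ f ∈ F, f.totalDegree ≤ d → f ∈ W) ∧
    ∀ (s : Fin n →₀ ℕ), ∀ f ∈ W,
      (monomial s (1 : K) * f).totalDegree ≤ d → monomial s (1 : K) * f ∈ W}

/-! Put `e = max (d + 1) (max deg fᵢ)` and `U = V F e`. Regularity makes every homogeneous
polynomial of degree `k ≥ d` the degree-`k` component of an element of `V F k`, so every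
polynomial of degree `≤ e` is congruent modulo `U` to one of degree `< d`. On such
representatives, multiplication by two variables never leaves degree `e`; hence multiplication by
the variables induces commuting operators on `K[x]_{≤e} / U`, which thereby becomes a
`K[x]`-module. The annihilator of the class of `1` is an ideal containing `F` whose elements of
degree `≤ e` are exactly those of `U`, i.e. `(F)_{≤e} = V F e`. Above degree `e`, the top
component of an element of `(F)` of degree `k` is cancelled by an element of `V F k`, and
induction on the degree finishes the proof. -/

namespace MvPolynomial

variable {σ R : Type*}

section CommSemiring

variable [CommSemiring R]

lemma totalDegree_X_mul_le (i : σ) (p : MvPolynomial σ R) :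
    (X i * p).totalDegree ≤ p.totalDegree + 1 := by
  refine (totalDegree_mul _ _).trans ?_
  have : (X i : MvPolynomial σ R).totalDegree ≤ 1 :=
    (totalDegree_monomial_le _ _).trans (by simp)
  omega

lemma totalDegree_monomial_le_degree (s : σ →₀ ℕ) (c : R) :
    (monomial s c).totalDegree ≤ s.degree :=
  totalDegree_monomial_le s c

lemma degree_le_totalDegree {p : MvPolynomial σ R} {s : σ →₀ ℕ} (hs : s ∈ p.support) :
    s.degree ≤ p.totalDegree :=
  le_totalDegree hs

lemma monomial_eq_smul_monomial_one (s : σ →₀ ℕ) (a : R) :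
    monomial s a = a • monomial s 1 := by
  rw [smul_monomial, smul_eq_mul, mul_one]

attribute [local instance] MvPolynomial.gradedAlgebra in
lemma homogeneousComponent_mul_of_isHomogeneous {t : MvPolynomial σ R} {m : ℕ}
    (ht : t.IsHomogeneous m) (a : MvPolynomial σ R) (k : ℕ) :
    homogeneousComponent k (a * t) = if m ≤ k then homogeneousComponent (k - m) a * t else 0 := by
  simpa [← decomposition.decompose'_apply] using
    DirectSum.coe_decompose_mul_of_right_mem (homogeneousSubmodule σ R) k (a := a) ht

lemma totalDegree_le_of_homogeneousComponent_eq_zero {p : MvPolynomial σ R} {k : ℕ}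
    (hp : p.totalDegree ≤ k + 1) (h : homogeneousComponent (k + 1) p = 0) :
    p.totalDegree ≤ k := by
  refine Finset.sup_le fun s hs => ?_
  have hne : s.degree ≠ k + 1 := fun hs' => mem_support_iff.1 hs (by
    simpa [h, hs'] using (coeff_homogeneousComponent (φ := p) (n := k + 1) s).symm)
  have := (degree_le_totalDegree hs).trans hp
  change s.degree ≤ k
  omega

end CommSemiring

section CommutingOperators

variable [CommRing R] {M : Type*} [AddCommGroup M] [Module R M]

open scoped IsMulCommutative in
lemma exists_linearMap_map_X_mul (T : σ → Module.End R M) (hT : ∀ i j, Commute (T i) (T j))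
    (v : M) : ∃ ψ : MvPolynomial σ R →ₗ[R] M, ψ 1 = v ∧ ∀ i p, ψ (X i * p) = T i (ψ p) := by
  have := Algebra.isMulCommutative_adjoin R (s := Set.range T)
    (by rintro _ ⟨i, rfl⟩ _ ⟨j, rfl⟩; exact hT i j)
  let Φ : MvPolynomial σ R →ₐ[R] Algebra.adjoin R (Set.range T) :=
    aeval fun i => ⟨T i, Algebra.subset_adjoin ⟨i, rfl⟩⟩
  refine ⟨(LinearMap.applyₗ v).comp ((Algebra.adjoin R (Set.range T)).val.toLinearMap.comp
    Φ.toLinearMap), by simp, fun i p => ?_⟩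
  simp [Φ]

variable {T : σ → Module.End R M} {ψ : MvPolynomial σ R →ₗ[R] M}

lemma map_mul_eq_zero_of_map_X_mul (hψ : ∀ i p, ψ (X i * p) = T i (ψ p))
    (q : MvPolynomial σ R) {p : MvPolynomial σ R} (hp : ψ p = 0) : ψ (q * p) = 0 := by
  induction q using MvPolynomial.induction_on with
  | C a => rw [C_mul', map_smul, hp, smul_zero]
  | add q r hq hr => rw [add_mul, map_add, hq, hr, add_zero]
  | mul_X q i hq => rw [mul_comm q, mul_assoc, hψ, hq, map_zero]

lemma eq_of_map_X_mul_of_totalDegree_le {e : ℕ} {π : MvPolynomial σ R →ₗ[R] M}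
    (h1 : ψ 1 = π 1) (hψ : ∀ i p, ψ (X i * p) = T i (ψ p))
    (hπ : ∀ i p, p.totalDegree < e → π (X i * p) = T i (π p))
    {p : MvPolynomial σ R} (hp : p.totalDegree ≤ e) : ψ p = π p := by
  have hmon : ∀ k (s : σ →₀ ℕ), s.degree = k → k ≤ e → ψ (monomial s 1) = π (monomial s 1) := by
    intro k
    induction k with
    | zero =>
      intro s hs _
      rwa [(Finsupp.degree_eq_zero_iff s).1 hs, ← one_def]
    | succ k ih =>
      intro s hs hke
      obtain ⟨i, hi⟩ : ∃ i, s i ≠ 0 := by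
        by_contra! h
        rw [show s = 0 from Finsupp.ext h, map_zero] at hs
        omega
      have hdeg : (s - Finsupp.single i 1).degree = k := by
        have := congrArg Finsupp.degree (Finsupp.sub_add_single_one_cancel hi)
        rw [map_add, Finsupp.degree_single] at this
        omega
      rw [← Finsupp.sub_add_single_one_cancel hi, add_comm, ← mul_one (1 : R), ← monomial_mul,
        ← X, hψ, hπ _ _ ((totalDegree_monomial_le_degree _ _).trans_lt (by omega)),
        ih _ hdeg (by omega)]
  rw [p.as_sum, map_sum, map_sum]
  refine Finset.sum_congr rfl fun s hs => ?_
  rw [monomial_eq_smul_monomial_one, map_smul, map_smul,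
    hmon _ s rfl ((degree_le_totalDegree hs).trans hp)]

end CommutingOperators

section TruncatedIdeal

variable [CommRing R] {U : Submodule R (MvPolynomial σ R)} {c e : ℕ}

lemma exists_linearMap_sub_mem
    (hred : ∀ p : MvPolynomial σ R, p.totalDegree ≤ e → ∃ r, r.totalDegree ≤ c ∧ p - r ∈ U) :
    ∃ ρ : MvPolynomial σ R →ₗ[R] MvPolynomial σ R,
      (∀ p, (ρ p).totalDegree ≤ c) ∧ ∀ p, p.totalDegree ≤ e → p - ρ p ∈ U := by
  have hmon : ∀ s : σ →₀ ℕ, ∃ r : MvPolynomial σ R, r.totalDegree ≤ c ∧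
      (s.degree ≤ e → monomial s 1 - r ∈ U) := by
    intro s
    by_cases hs : s.degree ≤ e
    · obtain ⟨r, hrc, hrU⟩ := hred _ ((totalDegree_monomial_le_degree _ _).trans hs)
      exact ⟨r, hrc, fun _ => hrU⟩
    · exact ⟨0, by simp, fun h => absurd h hs⟩
  choose r hrc hrU using hmon
  let ρ := (basisMonomials σ R).constr R r
  have hρ : ∀ s a, ρ (monomial s a) = a • r s := by
    intro s a
    rw [monomial_eq_smul_monomial_one, map_smul]
    congr 1
    simpa [ρ] using (basisMonomials σ R).constr_basis R r s
  refine ⟨ρ, fun p => ?_, fun p hp => ?_⟩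
  · induction p using MvPolynomial.induction_on' with
    | monomial s a => rw [hρ]; exact (totalDegree_smul_le _ _).trans (hrc s)
    | add p q hp hq => rw [map_add]; exact (totalDegree_add _ _).trans (max_le hp hq)
  · rw [p.as_sum, map_sum, ← Finset.sum_sub_distrib]
    refine U.sum_mem fun s hs => ?_
    rw [hρ, monomial_eq_smul_monomial_one, ← smul_sub]
    exact U.smul_mem _ (hrU s ((degree_le_totalDegree hs).trans hp))

lemma exists_commuting_quotient (hU : ∀ i, ∀ u ∈ U, (X i * u).totalDegree ≤ e → X i * u ∈ U)
    (hred : ∀ p : MvPolynomial σ R, p.totalDegree ≤ e → ∃ r, r.totalDegree ≤ c ∧ p - r ∈ U)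
    (hce : c + 2 ≤ e) :
    ∃ (W : Submodule R (MvPolynomial σ R)) (T : σ → Module.End R (MvPolynomial σ R ⧸ W)),
      (∀ p, p.totalDegree ≤ e → (p ∈ W ↔ p ∈ U)) ∧ (∀ i j, Commute (T i) (T j)) ∧
        ∀ i p, p.totalDegree < e → W.mkQ (X i * p) = T i (W.mkQ p) := by
  obtain ⟨ρ, hρc, hρU⟩ := exists_linearMap_sub_mem hred
  have hW : ∀ p, p.totalDegree ≤ e → (ρ p ∈ U ↔ p ∈ U) := fun p hp =>
    ⟨fun h => by simpa using U.add_mem (hρU p hp) h, fun h => by simpa using U.sub_mem h (hρU p hp)⟩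
  -- `Xᵢ` acts through the representatives `ρ p`, of degree `≤ c`, so that two such actions
  -- stay in degree `≤ e`, where `U` is closed under multiplication by variables.
  let T i := LinearMap.mulLeft R (X i) ∘ₗ ρ
  have hTc : ∀ i p, (T i p).totalDegree ≤ c + 1 := fun i p =>
    (totalDegree_X_mul_le i _).trans (by have := hρc p; omega)
  have hT : ∀ i p, p.totalDegree < e → X i * p - T i p ∈ U.comap ρ := by
    intro i p hp
    have hsub : X i * p - T i p = X i * (p - ρ p) := (mul_sub _ _ _).symm
    have hdeg : (X i * (p - ρ p)).totalDegree ≤ e :=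
      (totalDegree_X_mul_le i _).trans (by have := totalDegree_sub p (ρ p); have := hρc p; omega)
    rw [Submodule.mem_comap, hW _ (hsub ▸ hdeg), hsub]
    exact hU i _ (hρU p hp.le) hdeg
  have hTW : ∀ i, U.comap ρ ≤ (U.comap ρ).comap (T i) := fun i p hp => by
    have hdeg : (T i p).totalDegree ≤ e := by have := hTc i p; omega
    rw [Submodule.mem_comap, Submodule.mem_comap, hW _ hdeg]
    exact hU i _ hp hdeg
  let T' i := (U.comap ρ).mapQ (U.comap ρ) (T i) (hTW i)
  have hT' : ∀ i p, p.totalDegree < e →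
      (U.comap ρ).mkQ (X i * p) = T' i ((U.comap ρ).mkQ p) :=
    fun i p hp => (Submodule.Quotient.eq _).2 (hT i p hp)
  refine ⟨U.comap ρ, T', hW, fun i j => ?_, hT'⟩
  refine Submodule.linearMap_qext _ (LinearMap.ext fun p => ?_)
  have hlow : ∀ i, (T i p).totalDegree < e := fun i => by have := hTc i p; omega
  calc T' i (T' j ((U.comap ρ).mkQ p)) = (U.comap ρ).mkQ (X i * T j p) := (hT' i _ (hlow j)).symm
    _ = (U.comap ρ).mkQ (X j * T i p) := by
      simp only [T, LinearMap.comp_apply, LinearMap.mulLeft_apply, mul_left_comm]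
    _ = T' j (T' i ((U.comap ρ).mkQ p)) := hT' j _ (hlow i)

theorem exists_ideal_mem_iff_of_totalDegree_le
    (hU : ∀ i, ∀ u ∈ U, (X i * u).totalDegree ≤ e → X i * u ∈ U)
    (hred : ∀ p : MvPolynomial σ R, p.totalDegree ≤ e → ∃ r, r.totalDegree ≤ c ∧ p - r ∈ U)
    (hce : c + 2 ≤ e) :
    ∃ J : Ideal (MvPolynomial σ R), ∀ p, p.totalDegree ≤ e → (p ∈ J ↔ p ∈ U) := by
  obtain ⟨W, T, hWU, hT, hXT⟩ := exists_commuting_quotient hU hred hce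
  obtain ⟨ψ, hψ1, hψX⟩ := exists_linearMap_map_X_mul T hT (W.mkQ 1)
  refine ⟨{ carrier := {p | ψ p = 0}
            add_mem' := fun hp hq => by simp_all
            zero_mem' := map_zero ψ
            smul_mem' := fun q _ hp => map_mul_eq_zero_of_map_X_mul hψX q hp }, fun p hp => ?_⟩
  change ψ p = 0 ↔ _
  rw [eq_of_map_X_mul_of_totalDegree_le hψ1 hψX hXT hp, Submodule.mkQ_apply,
    Submodule.Quotient.mk_eq_zero, hWU p hp]

end TruncatedIdeal

end MvPolynomial

section LastFallDegree

variable {n : ℕ} {K : Type*} [Field K] {F : Finset (MvPolynomial (Fin n) K)} {c d e k : ℕ}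

lemma V_le {W : Submodule K (MvPolynomial (Fin n) K)} (hF : ∀ f ∈ F, f.totalDegree ≤ c → f ∈ W)
    (hW : ∀ (s : Fin n →₀ ℕ), ∀ f ∈ W,
      (monomial s (1 : K) * f).totalDegree ≤ c → monomial s (1 : K) * f ∈ W) :
    V F c ≤ W :=
  sInf_le ⟨hF, hW⟩

lemma mem_V_of_mem {f : MvPolynomial (Fin n) K} (hf : f ∈ F) (hc : f.totalDegree ≤ c) :
    f ∈ V F c :=
  Submodule.mem_sInf.2 fun _ hW => hW.1 f hf hc

lemma monomial_mul_mem_V {f : MvPolynomial (Fin n) K} (s : Fin n →₀ ℕ) (hf : f ∈ V F c)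
    (hc : (monomial s (1 : K) * f).totalDegree ≤ c) : monomial s (1 : K) * f ∈ V F c :=
  Submodule.mem_sInf.2 fun W hW => hW.2 s f (Submodule.mem_sInf.1 hf W hW) hc

lemma V_mono (h : c ≤ e) : V F c ≤ V F e :=
  V_le (fun _ hf hc => mem_V_of_mem hf (hc.trans h))
    (fun s _ hf hc => monomial_mul_mem_V s hf (hc.trans h))

lemma V_le_span : V F c ≤ (Ideal.span (F : Set (MvPolynomial (Fin n) K))).restrictScalars K :=
  V_le (fun _ hf _ => Ideal.subset_span hf) (fun _ _ hf _ => Ideal.mul_mem_left _ _ hf)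

lemma V_le_restrictTotalDegree : V F c ≤ restrictTotalDegree (Fin n) K c :=
  V_le (fun _ _ hc => (mem_restrictTotalDegree _ _ _).2 hc)
    (fun _ _ _ hc => (mem_restrictTotalDegree _ _ _).2 hc)

lemma totalDegree_le_of_mem_V {f : MvPolynomial (Fin n) K} (hf : f ∈ V F c) :
    f.totalDegree ≤ c :=
  (mem_restrictTotalDegree _ _ _).1 (V_le_restrictTotalDegree hf)

lemma mul_mem_V {f h : MvPolynomial (Fin n) K} (hf : f ∈ V F c)
    (hc : h.totalDegree + f.totalDegree ≤ c) : h * f ∈ V F c := by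
  rw [h.as_sum, Finset.sum_mul]
  refine Submodule.sum_mem _ fun s hs => ?_
  rw [monomial_eq_smul_monomial_one, smul_mul_assoc]
  refine Submodule.smul_mem _ _ (monomial_mul_mem_V s hf ?_)
  refine (totalDegree_mul _ _).trans ?_
  have := (totalDegree_monomial_le_degree s (1 : K)).trans (degree_le_totalDegree hs)
  omega

lemma regAt.mono (hreg : regAt F d) (hdk : d ≤ k) : regAt F k := by
  intro p hp
  rw [p.as_sum]
  refine Submodule.sum_mem _ fun s hs => ?_
  have hsk : s.degree = k := by
    rw [Finsupp.degree_eq_weight_one]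
    exact hp (mem_support_iff.1 hs)
  obtain ⟨t, hts, htd⟩ := Finsupp.exists_le_degree_eq s d (hsk ▸ hdk)
  have hst : monomial s (coeff s p) = monomial (s - t) (coeff s p) * monomial t 1 := by
    rw [monomial_mul, mul_one, tsub_add_cancel_of_le hts]
  rw [hst]
  exact Ideal.mul_mem_left _ _ (hreg _ (isHomogeneous_monomial _ htd))

lemma regAt.exists_mem_V_homogeneousComponent_eq (hreg : regAt F d) (hdk : d ≤ k)
    {p : MvPolynomial (Fin n) K} (hp : p.IsHomogeneous k) :
    ∃ l ∈ V F k, homogeneousComponent k l = p := by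
  have hpI := hreg.mono hdk p hp
  rw [Set.image_eq_range, Ideal.mem_span_range_iff_exists_fun] at hpI
  obtain ⟨a, ha⟩ := hpI
  -- From `p = ∑ a_f · top(f)`, keep in each `a_f` only the part that lands in degree `k`.
  refine ⟨∑ f : F, if f.1.totalDegree ≤ k then
      homogeneousComponent (k - f.1.totalDegree) (a f) * f.1 else 0, ?_, ?_⟩
  · refine Submodule.sum_mem _ fun f _ => ?_
    split_ifs with hfk
    · refine mul_mem_V (mem_V_of_mem f.2 hfk) ?_
      have := (homogeneousComponent_isHomogeneous (k - f.1.totalDegree) (a f)).totalDegree_le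
      omega
    · exact Submodule.zero_mem _
  · rw [← homogeneousComponent_eq_self hp, ← ha, map_sum, map_sum]
    refine Finset.sum_congr rfl fun f _ => ?_
    rw [homogeneousComponent_mul_of_isHomogeneous (t := topPart f.1)
      (homogeneousComponent_isHomogeneous _ _)]
    split_ifs with hfk
    · rw [mul_comm, homogeneousComponent_mul_of_isHomogeneous
        (homogeneousComponent_isHomogeneous _ _), if_pos (Nat.sub_le _ _),
        Nat.sub_sub_self hfk, topPart, mul_comm]
    · simp

lemma regAt.exists_mem_V_totalDegree_sub_le (hreg : regAt F d) (hdk : d ≤ k + 1)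
    {p : MvPolynomial (Fin n) K} (hp : p.totalDegree ≤ k + 1) :
    ∃ l ∈ V F (k + 1), (p - l).totalDegree ≤ k := by
  obtain ⟨l, hlV, hl⟩ :=
    hreg.exists_mem_V_homogeneousComponent_eq hdk (homogeneousComponent_isHomogeneous (k + 1) p)
  refine ⟨l, hlV, totalDegree_le_of_homogeneousComponent_eq_zero ?_ (by simp [hl])⟩
  exact (totalDegree_sub _ _).trans (max_le hp (totalDegree_le_of_mem_V hlV))

lemma regAt.exists_totalDegree_le_sub_mem_V (hreg : regAt F (c + 1))
    {p : MvPolynomial (Fin n) K} (hp : p.totalDegree ≤ e) :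
    ∃ r, r.totalDegree ≤ c ∧ p - r ∈ V F e := by
  suffices ∀ k ≤ e, ∀ p : MvPolynomial (Fin n) K, p.totalDegree ≤ k →
      ∃ r, r.totalDegree ≤ c ∧ p - r ∈ V F e from this e le_rfl p hp
  intro k
  induction k with
  | zero => exact fun _ p hp => ⟨p, by omega, by simp⟩
  | succ k ih =>
    intro hke p hp
    by_cases hkc : k + 1 ≤ c
    · exact ⟨p, hp.trans hkc, by simp⟩
    obtain ⟨l, hlV, hl⟩ := hreg.exists_mem_V_totalDegree_sub_le (by omega) hp
    obtain ⟨r, hr, hrV⟩ := ih (by omega) _ hl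
    refine ⟨r, hr, ?_⟩
    simpa [sub_right_comm p l r] using add_mem hrV (V_mono hke hlV)

lemma regAt.one_mem_V (hreg : regAt F 0) : (1 : MvPolynomial (Fin n) K) ∈ V F 0 := by
  obtain ⟨l, hlV, hl⟩ := hreg.exists_mem_V_homogeneousComponent_eq le_rfl (isHomogeneous_one _ _)
  rwa [← hl, homogeneousComponent_zero, ← totalDegree_eq_zero_iff_eq_C.1
    (Nat.le_zero.1 (totalDegree_le_of_mem_V hlV))]

lemma regAt.mem_V_of_mem_span (hreg : regAt F d) (hde : d + 1 ≤ e)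
    (hFe : F.sup totalDegree ≤ e) {g : MvPolynomial (Fin n) K}
    (hg : g ∈ Ideal.span (F : Set (MvPolynomial (Fin n) K))) (hge : g.totalDegree ≤ e) :
    g ∈ V F e := by
  rcases d with _ | c
  · simpa using mul_mem_V (V_mono (Nat.zero_le e) hreg.one_mem_V) (by simpa using hge)
  · obtain ⟨J, hJ⟩ := exists_ideal_mem_iff_of_totalDegree_le (U := V F e)
      (fun i u hu => monomial_mul_mem_V (Finsupp.single i 1) hu)
      (fun p hp => hreg.exists_totalDegree_le_sub_mem_V hp) hde
    have hFJ : Ideal.span (F : Set (MvPolynomial (Fin n) K)) ≤ J := Ideal.span_le.2 fun f hf =>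
      have hfe := (Finset.le_sup hf).trans hFe
      (hJ f hfe).2 (mem_V_of_mem hf hfe)
    exact (hJ g hge).1 (hFJ hg)

theorem regAt.mem_V_of_mem_span_of_le (hreg : regAt F d) (hde : d + 1 ≤ e)
    (hFe : F.sup totalDegree ≤ e) (hek : e ≤ k) {g : MvPolynomial (Fin n) K}
    (hg : g ∈ Ideal.span (F : Set (MvPolynomial (Fin n) K))) (hgk : g.totalDegree ≤ k) :
    g ∈ V F k := by
  induction k, hek using Nat.le_induction generalizing g with
  | base => exact hreg.mem_V_of_mem_span hde hFe hg hgk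
  | succ k hek ih =>
    obtain ⟨l, hlV, hl⟩ := hreg.exists_mem_V_totalDegree_sub_le (by omega) hgk
    have hgl := ih (sub_mem hg (V_le_span hlV)) hl
    simpa using add_mem (V_mono k.le_succ hgl) hlV

end LastFallDegree

/-- Corollary 3.10: the last fall degree of `F` is at most `max{d_reg(F) + 1, max deg fᵢ}`:
every element `f` of the ideal `(F)` lies in `V_{F, max{t, deg f}}` for that `t`. -/
theorem stmt10 {n : ℕ} {K : Type*} [Field K] (F : Finset (MvPolynomial (Fin n) K)) (d : ℕ)
    (hreg : IsLeast {e | regAt F e} d) :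
    ∀ f ∈ Ideal.span (F : Set (MvPolynomial (Fin n) K)),
      f ∈ V F (max (max (d + 1) (F.sup MvPolynomial.totalDegree)) f.totalDegree) := by
  intro f hf
  have hd : regAt F d := hreg.1
  exact hd.mem_V_of_mem_span_of_le (le_max_left _ _) (le_max_right _ _) (le_max_left _ _) hf
    (le_max_right _ _)
end
end

section
/- Let F = {x^k + y, y^k + x, xy} ⊆ K[x,y] with k > 1. Then y^2 ∈ V_{F,k+1}, via y^2 = y(x^k + y) − x^{k-1}(xy), and consequently x = (y^k + x) − y^{k-2}·y^2 ∈ V_{F,k+1} and y ∈ V_{F,k+1}. -/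
open MvPolynomial

noncomputable section

lemma totalDegree_X_pow_add_X_le {σ R : Type*} [CommSemiring R] [Nontrivial R] (i j : σ)
    (e : ℕ) : (X i ^ e + X j : MvPolynomial σ R).totalDegree ≤ max e 1 :=
  (totalDegree_add _ _).trans <| by simp [totalDegree_X_pow, totalDegree_X]

lemma totalDegree_X_mul_X_le {σ R : Type*} [CommSemiring R] [Nontrivial R] (i j : σ) :
    (X i * X j : MvPolynomial σ R).totalDegree ≤ 2 :=
  (totalDegree_mul _ _).trans <| by simp [totalDegree_X]

section V

variable {n : ℕ} {K : Type*} [Field K] {F : Finset (MvPolynomial (Fin n) K)} {d : ℕ}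
  {f : MvPolynomial (Fin n) K}

lemma mem_V_of_mem_s16 (hf : f ∈ F) (hd : f.totalDegree ≤ d) : f ∈ V F d :=
  Submodule.mem_sInf.2 fun _ hW => hW.1 f hf hd

lemma monomial_one_mul_mem_V (s : Fin n →₀ ℕ) (hf : f ∈ V F d)
    (hd : (monomial s (1 : K) * f).totalDegree ≤ d) : monomial s (1 : K) * f ∈ V F d :=
  Submodule.mem_sInf.2 fun W hW => hW.2 s f (Submodule.mem_sInf.1 hf W hW) hd

lemma X_pow_mul_mem_V (i : Fin n) (e : ℕ) (hf : f ∈ V F d) (hd : e + f.totalDegree ≤ d) :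
    X i ^ e * f ∈ V F d := by
  have hdeg : (X i ^ e * f).totalDegree ≤ d :=
    (totalDegree_mul _ _).trans (by rwa [totalDegree_X_pow])
  rw [X_pow_eq_monomial] at hdeg ⊢
  exact monomial_one_mul_mem_V _ hf hdeg

end V

/-- For `F = {x^k + y, y^k + x, xy}` with `k > 1`:
`y² = y(x^k + y) − x^{k-1}(xy) ∈ V_{F,k+1}`, and consequently
`x = (y^k + x) − y^{k-2}·y² ∈ V_{F,k+1}` and `y ∈ V_{F,k+1}`. -/
theorem stmt16 (K : Type*) [Field K] [DecidableEq K] (k : ℕ) (hk : 1 < k) :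
    ((X 1 : MvPolynomial (Fin 2) K) ^ 2 =
        X 1 * ((X 0) ^ k + X 1) - (X 0) ^ (k - 1) * (X 0 * X 1)) ∧
      (X 1 : MvPolynomial (Fin 2) K) ^ 2 ∈
        V ({(X 0) ^ k + X 1, (X 1) ^ k + X 0, X 0 * X 1} :
          Finset (MvPolynomial (Fin 2) K)) (k + 1) ∧
      ((X 0 : MvPolynomial (Fin 2) K) =
        ((X 1) ^ k + X 0) - (X 1) ^ (k - 2) * (X 1) ^ 2) ∧
      (X 0 : MvPolynomial (Fin 2) K) ∈
        V ({(X 0) ^ k + X 1, (X 1) ^ k + X 0, X 0 * X 1} :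
          Finset (MvPolynomial (Fin 2) K)) (k + 1) ∧
      (X 1 : MvPolynomial (Fin 2) K) ∈
        V ({(X 0) ^ k + X 1, (X 1) ^ k + X 0, X 0 * X 1} :
          Finset (MvPolynomial (Fin 2) K)) (k + 1) := by
  obtain ⟨m, rfl⟩ : ∃ m, k = m + 2 := ⟨k - 2, by omega⟩
  rw [show m + 2 - 1 = m + 1 by omega, Nat.add_sub_cancel]
  set F : Finset (MvPolynomial (Fin 2) K) := {X 0 ^ (m + 2) + X 1, X 1 ^ (m + 2) + X 0, X 0 * X 1}
  have hy2_eq : (X 1 : MvPolynomial (Fin 2) K) ^ 2 =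
      X 1 * (X 0 ^ (m + 2) + X 1) - X 0 ^ (m + 1) * (X 0 * X 1) := by ring
  have hx_eq : (X 0 : MvPolynomial (Fin 2) K) = (X 1 ^ (m + 2) + X 0) - X 1 ^ m * X 1 ^ 2 := by
    ring
  have hxk : X 0 ^ (m + 2) + X 1 ∈ V F (m + 2 + 1) :=
    mem_V_of_mem_s16 (by simp [F]) ((totalDegree_X_pow_add_X_le _ _ _).trans (by omega))
  have hyk : X 1 ^ (m + 2) + X 0 ∈ V F (m + 2 + 1) :=
    mem_V_of_mem_s16 (by simp [F]) ((totalDegree_X_pow_add_X_le _ _ _).trans (by omega))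
  have hxy : X 0 * X 1 ∈ V F (m + 2 + 1) :=
    mem_V_of_mem_s16 (by simp [F]) ((totalDegree_X_mul_X_le _ _).trans (by omega))
  have hy2 : X 1 ^ 2 ∈ V F (m + 2 + 1) := by
    rw [hy2_eq]
    refine sub_mem ?_ (X_pow_mul_mem_V 0 (m + 1) hxy (by grw [totalDegree_X_mul_X_le]))
    simpa using X_pow_mul_mem_V 1 1 hxk (by grw [totalDegree_X_pow_add_X_le]; omega)
  have hx : X 0 ∈ V F (m + 2 + 1) := by
    rw [hx_eq]
    exact sub_mem hyk (X_pow_mul_mem_V 1 m hy2 (by simp [totalDegree_X_pow]))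
  have hy : X 1 ∈ V F (m + 2 + 1) := by
    have hx_pow : X 0 ^ (m + 2) ∈ V F (m + 2 + 1) := by
      simpa only [← pow_succ] using X_pow_mul_mem_V 0 (m + 1) hx (by simp [totalDegree_X])
    simpa using sub_mem hxk hx_pow
  exact ⟨hy2_eq, hy2, hx_eq, hx, hy⟩
end
end
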